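/- Transfer of the matrix factorisation differential under the isomorphism ν: if X = (⋀F_ξ ⊗ R, ∑_i f_i ξ_i* + ∑_i g_i ξ_i) and Y = (⋀F_η ⊗ R, ∑_j u_j η_j* + ∑_j v_j η_j) are Koszul matrix factorisations of W = ∑f_ig_i = ∑u_jv_j, then under the isomorphism ν ⊗ 1: Hom_k(⋀F_ξ, ⋀F_η) ⊗ R ≅ ⋀F_η ⊗ ⋀F_ξ* ⊗ R, the Hom-differential d(α) = d_Y∘α − (−1)^{|α|} α∘d_X corresponds to the operator ∑_j u_j η_j* + ∑_j v_j η_j − ∑_i f_i ξ̄_i + ∑_i g_i ξ̄_i*, where ξ̄_i denotes wedging with ξ_i* in ⋀F_ξ* and ξ̄_i* the corresponding contraction. -/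

import Mathlib

noncomputable section
namespace Stmt13

/- Koszul matrix factorisations.  Over `R = k[x_1,…,x_m]`, the underlying module of
`X = (⋀F_ξ ⊗ R, ∑_i f_i ξ_i^* + ∑_i g_i ξ_i)` is modelled as the free `R`-module on subsets
of `{1,…,r}` (the monomial basis of `⋀F_ξ`), and similarly for
`Y = (⋀F_η ⊗ R, ∑_j u_j η_j^* + ∑_j v_j η_j)` with subsets of `{1,…,s}`.
`Hom_k(⋀F_ξ,⋀F_η) ⊗ R = Hom_R(X,Y)` and `⋀F_η ⊗ ⋀F_ξ^* ⊗ R` is the free `R`-module on pairs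
of subsets. -/

def ksign {n : ℕ} (i : Fin n) (S : Finset (Fin n)) : ℤ :=
  (-1) ^ (S.filter (fun j => j < i)).card

variable {R : Type*} [CommRing R]

/-- Wedge operator `ξ_i ∧ (−)` on `⋀F_ξ ⊗ R`. -/
def wedgeOp {n : ℕ} (i : Fin n) : (Finset (Fin n) → R) →ₗ[R] (Finset (Fin n) → R) where
  toFun f S := if i ∈ S then ksign i S • f (S.erase i) else 0
  map_add' f g := by funext S; by_cases h : i ∈ S <;> simp [h, smul_add]
  map_smul' a f := by funext S; by_cases h : i ∈ S <;> simp [h]; ring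

/-- Contraction operator `ξ_i^* ⌟ (−)` on `⋀F_ξ ⊗ R`. -/
def contrOp {n : ℕ} (i : Fin n) : (Finset (Fin n) → R) →ₗ[R] (Finset (Fin n) → R) where
  toFun f S := if i ∈ S then 0 else ksign i S • f (insert i S)
  map_add' f g := by funext S; by_cases h : i ∈ S <;> simp [h, smul_add]
  map_smul' a f := by funext S; by_cases h : i ∈ S <;> simp [h]; ring

/-- The grading involution `ε`. -/
def epsOp {n : ℕ} : Module.End R (Finset (Fin n) → R) where
  toFun f S := ((-1 : ℤ) ^ S.card) • f S
  map_add' f g := by funext S; simp [smul_add]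
  map_smul' a f := by funext S; simp; ring

/-- The Koszul matrix factorisation differential `∑_i f_i ξ_i^* + ∑_i g_i ξ_i`. -/
def dMF {n : ℕ} (f g : Fin n → R) : Module.End R (Finset (Fin n) → R) :=
  ∑ i, f i • contrOp i + ∑ i, g i • wedgeOp i

variable {r s : ℕ}

/-- The differential on `Hom_R(X,Y)`:
`d(α) = d_Y ∘ α − (−1)^{|α|} α ∘ d_X`, linearly extended from homogeneous `α` using the
grading involutions (`(−1)^{|α|}α = ε_Y ∘ α ∘ ε_X`). -/
def dHom (u v : Fin s → R) (f g : Fin r → R)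
    (φ : (Finset (Fin r) → R) →ₗ[R] (Finset (Fin s) → R)) :
    (Finset (Fin r) → R) →ₗ[R] (Finset (Fin s) → R) :=
  dMF u v ∘ₗ φ - (epsOp ∘ₗ φ ∘ₗ epsOp) ∘ₗ dMF f g

/-- The isomorphism `ν : Hom_k(⋀F_ξ,⋀F_η) ⊗ R ≅ ⋀F_η ⊗ ⋀F_ξ^* ⊗ R`,
`ν(φ) = ∑_{p≥0} ∑_{i_1<⋯<i_p} (−1)^{p(p−1)/2} φ(ξ_{i_1}⋯ξ_{i_p}) ⊗ ξ_{i_1}^*∧⋯∧ξ_{i_p}^*`. -/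
def nu (φ : (Finset (Fin r) → R) →ₗ[R] (Finset (Fin s) → R)) :
    (Finset (Fin s) × Finset (Fin r)) → R := fun p =>
  ((-1 : ℤ) ^ Nat.choose p.2.card 2) • φ (Pi.single p.2 1) p.1

/-- The operator `∑_j u_j η_j^* + ∑_j v_j η_j − ∑_i f_i ξ̄_i + ∑_i g_i ξ̄_i^*` on
`⋀F_η ⊗ ⋀F_ξ^* ⊗ R`, where `ξ̄_i` denotes wedging with `ξ_i^*` in the `⋀F_ξ^*` factor and
`ξ̄_i^*` the corresponding contraction (these carry the Koszul sign `(−1)^{|η\text{-part}|}`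
as operators on the tensor product). -/
def Dnu (u v : Fin s → R) (f g : Fin r → R)
    (z : (Finset (Fin s) × Finset (Fin r)) → R) :
    (Finset (Fin s) × Finset (Fin r)) → R := fun p =>
  (∑ j, u j * (if j ∈ p.1 then 0 else ksign j p.1 • z (insert j p.1, p.2)))
  + (∑ j, v j * (if j ∈ p.1 then ksign j p.1 • z (p.1.erase j, p.2) else 0))
  - (∑ i, f i * (((-1 : ℤ) ^ p.1.card) •
      (if i ∈ p.2 then ksign i p.2 • z (p.1, p.2.erase i) else 0)))
  + (∑ i, g i * (((-1 : ℤ) ^ p.1.card) •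
      (if i ∈ p.2 then 0 else ksign i p.2 • z (p.1, insert i p.2))))

/-! The sign `(−1)^{p(p−1)/2}` in `ν` turns transposition into the grading involution: for a
linear form `l` on `⋀F_ξ ⊗ R`, the `ν`-coefficients of `l ∘ ε ∘ (ξ_i^* ⌟ −)` are `ξ̄_i` applied to
those of `l`, and those of `l ∘ ε ∘ (ξ_i ∧ −)` are `−ξ̄_i^*` applied to them, because
`p(p−1)/2` and `(p+1)p/2` differ by `p`. So precomposing with `ε_X`-twisted `d_X` becomes
`∑ f_i ξ̄_i − ∑ g_i ξ̄_i^*` on `⋀F_ξ^*`, postcomposing with `d_Y` acts on `⋀F_η` alone, and the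
remaining `ε_Y` is the Koszul sign `(−1)^{|η-part|}`. -/

lemma ksign_insert_self {n : ℕ} (i : Fin n) (T : Finset (Fin n)) :
    ksign i (insert i T) = ksign i T := by
  simp [ksign, Finset.filter_insert]

lemma ksign_erase_self {n : ℕ} (i : Fin n) (T : Finset (Fin n)) :
    ksign i (T.erase i) = ksign i T := by
  rw [ksign, ksign, Finset.filter_erase, Finset.erase_eq_of_notMem (by simp)]

section Basis

variable {n : ℕ} (i : Fin n) (T : Finset (Fin n))

lemma contrOp_single :
    contrOp i (Pi.single T (1 : R)) =
      if i ∈ T then ksign i T • Pi.single (T.erase i) 1 else 0 := by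
  funext S
  simp only [contrOp, LinearMap.coe_mk, AddHom.coe_mk, Pi.single_apply]
  by_cases hS : i ∈ S
  · have hne : S ≠ T.erase i := fun h => Finset.notMem_erase i T (h ▸ hS)
    split_ifs <;> simp_all
  · by_cases hT : i ∈ T
    · have hiff : insert i S = T ↔ S = T.erase i := by
        rw [eq_comm, ← Finset.erase_eq_iff_eq_insert hT hS, eq_comm]
      by_cases hST : S = T.erase i
      · simp [hT, hST, ksign_erase_self]
      · simp [hS, hT, hST, hiff]
    · have hne : insert i S ≠ T := fun h => hT (h ▸ Finset.mem_insert_self i S)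
      simp [hS, hT, hne]

lemma wedgeOp_single :
    wedgeOp i (Pi.single T (1 : R)) =
      if i ∈ T then 0 else ksign i T • Pi.single (insert i T) 1 := by
  funext S
  simp only [wedgeOp, LinearMap.coe_mk, AddHom.coe_mk, Pi.single_apply]
  by_cases hS : i ∈ S
  · by_cases hT : i ∈ T
    · have hne : S.erase i ≠ T := fun h => Finset.notMem_erase i S (h ▸ hT)
      simp [hS, hT, hne]
    · by_cases hST : S = insert i T
      · simp [hT, hST, ksign_insert_self]
      · simp [hS, hT, hST, Finset.erase_eq_iff_eq_insert hS hT]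
  · have hne : S ≠ insert i T := fun h => hS (h ▸ Finset.mem_insert_self i T)
    split_ifs <;> simp_all

lemma epsOp_single :
    epsOp (Pi.single T (1 : R)) = ((-1 : ℤ) ^ T.card) • Pi.single T 1 := by
  funext S
  by_cases h : S = T
  · subst h; simp [epsOp]
  · simp [epsOp, h]

end Basis

lemma neg_one_pow_choose_two_succ (n : ℕ) :
    (-1 : ℤ) ^ (n + 1).choose 2 = (-1) ^ n.choose 2 * (-1) ^ n := by
  rw [Nat.choose_succ_succ, Nat.choose_one_right, pow_add, mul_comm]

/-- `ν` on linear forms `⋀F_ξ ⊗ R → R`, with values in `⋀F_ξ^* ⊗ R`. -/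
def signedCoeffs {n : ℕ} : Module.Dual R (Finset (Fin n) → R) →ₗ[R] (Finset (Fin n) → R) where
  toFun l T := ((-1 : ℤ) ^ T.card.choose 2) • l (Pi.single T 1)
  map_add' l l' := by funext T; simp [smul_add]
  map_smul' a l := by funext T; simp [mul_left_comm]

section Transpose

variable {n : ℕ} (l : Module.Dual R (Finset (Fin n) → R)) (i : Fin n)

lemma signedCoeffs_comp_epsOp_contrOp :
    signedCoeffs (l ∘ₗ epsOp ∘ₗ contrOp i) = wedgeOp i (signedCoeffs l) := by
  funext T
  by_cases hT : i ∈ T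
  · have hcard := Finset.card_erase_add_one hT
    simp only [signedCoeffs, wedgeOp, LinearMap.coe_mk, AddHom.coe_mk, LinearMap.comp_apply,
      contrOp_single, epsOp_single, hT, if_true, map_zsmul, smul_smul]
    rw [← hcard, neg_one_pow_choose_two_succ]
    congr 1
    linear_combination ksign i T * (-1) ^ (T.erase i).card.choose 2 *
      pow_mul_pow_eq_one (T.erase i).card (by norm_num : (-1 : ℤ) * -1 = 1)
  · simp [signedCoeffs, wedgeOp, contrOp_single, hT]

lemma signedCoeffs_comp_epsOp_wedgeOp :
    signedCoeffs (l ∘ₗ epsOp ∘ₗ wedgeOp i) = -contrOp i (signedCoeffs l) := by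
  funext T
  by_cases hT : i ∈ T
  · simp [signedCoeffs, contrOp, wedgeOp_single, hT]
  · simp only [signedCoeffs, contrOp, LinearMap.coe_mk, AddHom.coe_mk, LinearMap.comp_apply,
      wedgeOp_single, epsOp_single, hT, if_false, map_zsmul, smul_smul, Pi.neg_apply,
      Finset.card_insert_of_notMem hT, neg_one_pow_choose_two_succ, ← neg_smul]
    congr 1
    ring

lemma signedCoeffs_comp_epsOp_dMF (f g : Fin n → R) :
    signedCoeffs (l ∘ₗ epsOp ∘ₗ dMF f g) = dMF (-g) f (signedCoeffs l) := by
  have hsplit : l ∘ₗ epsOp ∘ₗ dMF f g =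
      ∑ i, f i • (l ∘ₗ epsOp ∘ₗ contrOp i) + ∑ i, g i • (l ∘ₗ epsOp ∘ₗ wedgeOp i) := by
    ext x
    simp [dMF, map_sum]
  rw [hsplit]
  simp only [map_add, map_sum, map_smul, signedCoeffs_comp_epsOp_contrOp,
    signedCoeffs_comp_epsOp_wedgeOp, dMF, LinearMap.add_apply, LinearMap.sum_apply,
    LinearMap.smul_apply, Pi.neg_apply, neg_smul, smul_neg, Finset.sum_neg_distrib]
  abel

end Transpose

section Nu

variable (u v : Fin s → R) (f g : Fin r → R)
  (φ : (Finset (Fin r) → R) →ₗ[R] (Finset (Fin s) → R)) (S : Finset (Fin s)) (T : Finset (Fin r))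

lemma nu_apply_eq_signedCoeffs :
    nu φ (S, T) = signedCoeffs (LinearMap.proj (R := R) S ∘ₗ φ) T :=
  rfl

lemma nu_sub (ψ : (Finset (Fin r) → R) →ₗ[R] (Finset (Fin s) → R)) :
    nu (φ - ψ) = nu φ - nu ψ := by
  funext p
  simp [nu, smul_sub]

lemma nu_dMF_comp : nu (dMF u v ∘ₗ φ) (S, T) = dMF u v (fun S' => nu φ (S', T)) S := by
  have hslice : (fun S' => nu φ (S', T)) = ((-1 : ℤ) ^ T.card.choose 2) • φ (Pi.single T 1) :=
    rfl
  rw [hslice, map_zsmul]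
  rfl

lemma nu_epsOp_conj_comp_dMF :
    nu ((epsOp ∘ₗ φ ∘ₗ epsOp) ∘ₗ dMF f g) (S, T) =
      ((-1 : ℤ) ^ S.card) • dMF (-g) f (fun T' => nu φ (S, T')) T := by
  have hcomp : LinearMap.proj S ∘ₗ (epsOp ∘ₗ φ ∘ₗ epsOp) ∘ₗ dMF f g =
      ((-1 : ℤ) ^ S.card) • ((LinearMap.proj S ∘ₗ φ) ∘ₗ epsOp ∘ₗ dMF f g) :=
    LinearMap.ext fun _ => rfl
  rw [nu_apply_eq_signedCoeffs, hcomp, map_zsmul, signedCoeffs_comp_epsOp_dMF]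
  rfl

lemma Dnu_apply (z : Finset (Fin s) × Finset (Fin r) → R) :
    Dnu u v f g z (S, T) =
      dMF u v (fun S' => z (S', T)) S -
        ((-1 : ℤ) ^ S.card) • dMF (-g) f (fun T' => z (S, T')) T := by
  simp only [Dnu, dMF, contrOp, wedgeOp, LinearMap.add_apply, LinearMap.sum_apply,
    LinearMap.smul_apply, LinearMap.coe_mk, AddHom.coe_mk, Pi.add_apply, Finset.sum_apply,
    Pi.smul_apply, smul_eq_mul, Pi.neg_apply, smul_add, Finset.smul_sum, mul_smul_comm, neg_mul,
    smul_neg, Finset.sum_neg_distrib]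
  abel

lemma nu_dHom : nu (dHom u v f g φ) = Dnu u v f g (nu φ) := by
  funext ⟨S, T⟩
  rw [dHom, nu_sub, Pi.sub_apply, nu_dMF_comp, nu_epsOp_conj_comp_dMF, Dnu_apply]

end Nu

theorem nu_transfers_differential_general {k : Type*} [CommRing k] {m : ℕ}
    (u v : Fin s → MvPolynomial (Fin m) k)
    (f g : Fin r → MvPolynomial (Fin m) k)
    (φ : (Finset (Fin r) → MvPolynomial (Fin m) k) →ₗ[MvPolynomial (Fin m) k]
          (Finset (Fin s) → MvPolynomial (Fin m) k)) :
    nu (dHom u v f g φ) = Dnu u v f g (nu φ) :=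
  nu_dHom u v f g φ

/-- If `X = (⋀F_ξ ⊗ R, ∑f_iξ_i^* + ∑g_iξ_i)` and
`Y = (⋀F_η ⊗ R, ∑u_jη_j^* + ∑v_jη_j)` are Koszul matrix factorisations of
`W = ∑f_ig_i = ∑u_jv_j`, then under `ν ⊗ 1 : Hom_k(⋀F_ξ,⋀F_η) ⊗ R ≅ ⋀F_η ⊗ ⋀F_ξ^* ⊗ R` the
Hom-differential corresponds to `∑_j u_j η_j^* + ∑_j v_j η_j − ∑_i f_i ξ̄_i + ∑_i g_i ξ̄_i^*`. -/
theorem nu_transfers_differential {k : Type*} [CommRing k] {m : ℕ}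
    (W : MvPolynomial (Fin m) k) (u v : Fin s → MvPolynomial (Fin m) k)
    (f g : Fin r → MvPolynomial (Fin m) k)
    (hfg : ∑ i, f i * g i = W) (huv : ∑ j, u j * v j = W)
    (φ : (Finset (Fin r) → MvPolynomial (Fin m) k) →ₗ[MvPolynomial (Fin m) k]
          (Finset (Fin s) → MvPolynomial (Fin m) k)) :
    nu (dHom u v f g φ) = Dnu u v f g (nu φ) :=
  nu_transfers_differential_general u v f g φ

end Stmt13
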